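/- arXiv:1601.02960 — 5 statements merged into one kernel-verified Lean document; each statement's English description precedes it below -/
import Mathlib

section
/- Let A be a square matrix of order m over a field. If |A| = 0 and A is superregular, then every term of the determinant of A is trivial; in particular, if A has nonzero entries along its main diagonal and is bordered as in the construction (i.e., A = V is the (t+1)×(t+1) matrix formed from a nonsingular t×t block with nonzero diagonal, an extra row, an extra column, and corner entry μ), then the corner entry μ must be zero. -/
/-- A matrix is superregular if every nontrivial minor is nonzero. -/
def Superregular {F : Type*} [Field F] {a b : ℕ} (B : Matrix (Fin a) (Fin b) F) : Prop :=
  ∀ (m : ℕ) (r : Fin m → Fin a) (c : Fin m → Fin b),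
    Function.Injective r → Function.Injective c →
    (∃ σ : Equiv.Perm (Fin m), ∀ i, B (r i) (c (σ i)) ≠ 0) →
    (B.submatrix r c).det ≠ 0

namespace Superregular

variable {F : Type*} [Field F] {n : ℕ} {A : Matrix (Fin n) (Fin n) F}

/-- The whole matrix is one of its own minors. -/
theorem det_ne_zero_of_forall_ne_zero (hA : Superregular A) {σ : Equiv.Perm (Fin n)}
    (hσ : ∀ i, A i (σ i) ≠ 0) : A.det ≠ 0 := by
  simpa using hA n id id Function.injective_id Function.injective_id ⟨σ, hσ⟩

theorem exists_eq_zero_of_det_eq_zero (hA : Superregular A) (hdet : A.det = 0)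
    (σ : Equiv.Perm (Fin n)) : ∃ i, A i (σ i) = 0 := by
  by_contra! hσ
  exact hA.det_ne_zero_of_forall_ne_zero hσ hdet

end Superregular

/-- If a superregular square matrix has zero determinant then every term of the Leibniz
expansion of its determinant is trivial; in particular, for a `(t+1)×(t+1)` matrix whose
leading `t×t` block has nonzero diagonal entries, the corner entry must be zero. -/
theorem stmt3 {F : Type*} [Field F] {t : ℕ} (A : Matrix (Fin (t + 1)) (Fin (t + 1)) F)
    (hA : Superregular A) (hdet : A.det = 0) :
    (∀ σ : Equiv.Perm (Fin (t + 1)), ∃ i, A i (σ i) = 0) ∧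
    ((∀ i : Fin t, A i.castSucc i.castSucc ≠ 0) → A (Fin.last t) (Fin.last t) = 0) := by
  have hterms := hA.exists_eq_zero_of_det_eq_zero hdet
  refine ⟨hterms, fun hdiag => ?_⟩
  obtain ⟨i, hi⟩ := hterms 1
  induction i using Fin.lastCases with
  | last => simpa using hi
  | cast j => exact absurd (by simpa using hi) (hdiag j)
end

section
/- Let α be a primitive element of the finite field F = F_{p^N} and let B = [ν_{iℓ}] be a matrix over F such that: (1) every nonzero entry ν_{iℓ} equals α^{β_{iℓ}} for a positive integer β_{iℓ}; (2) if ν_{iℓ} = 0 then either ν_{i'ℓ} = 0 for all i' > i, or ν_{iℓ'} = 0 for all ℓ' < ℓ; (3) if ℓ < ℓ' and ν_{iℓ}, ν_{iℓ'} are both nonzero then 2β_{iℓ} ≤ β_{iℓ'}; (4) if i < i' and ν_{iℓ}, ν_{i'ℓ} are both nonzero then 2β_{iℓ} ≤ β_{i'ℓ}. If N is greater than every exponent of α appearing in any nontrivial term of any minor of B, then B is superregular. -/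
/-!
Among the nontrivial terms of a minor, the one with the least total exponent of `α` is unique.
Indeed, if two distinct terms both had minimal exponent, look at the lowest row where they
disagree: the zero pattern (2) makes the exchange of two entries of one of them another nontrivial
term, and the doubling conditions (3), (4) make its exponent strictly smaller. So the minor is a
signed sum of powers `α ^ e` with all `e < N` and one exponent occurring exactly once, i.e. the
value at `α` of a nonzero polynomial over `𝔽_p` of degree `< N`. As `α` is primitive, its minimal
polynomial over `𝔽_p` has degree `N`, so the minor does not vanish.
-/

open Equiv Finset Polynomial Function IntermediateField

section Exchange

variable {ι κ n R : Type*} [LinearOrder ι] [LinearOrder κ] [Zero R] [Fintype n] [DecidableEq n]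

/-- Conditions (1)–(4) of the theorem on the exponents `β` of the nonzero entries of `B`,
except that (1) is reduced to the positivity of the exponents. -/
structure IsDoublingPattern (B : Matrix ι κ R) (β : ι → κ → ℕ) : Prop where
  pos : ∀ i ℓ, B i ℓ ≠ 0 → 0 < β i ℓ
  zero : ∀ i ℓ, B i ℓ = 0 → (∀ i', i < i' → B i' ℓ = 0) ∨ (∀ ℓ', ℓ' < ℓ → B i ℓ' = 0)
  row : ∀ i ℓ ℓ', ℓ < ℓ' → B i ℓ ≠ 0 → B i ℓ' ≠ 0 → 2 * β i ℓ ≤ β i ℓ'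
  col : ∀ i i' ℓ, i < i' → B i ℓ ≠ 0 → B i' ℓ ≠ 0 → 2 * β i ℓ ≤ β i' ℓ

def IsNontrivialTerm (B : Matrix ι κ R) (r : n → ι) (c : n → κ) (σ : Perm n) : Prop :=
  ∀ i, B (r i) (c (σ i)) ≠ 0

def termExponent (β : ι → κ → ℕ) (r : n → ι) (c : n → κ) (σ : Perm n) : ℕ :=
  ∑ i, β (r i) (c (σ i))

theorem sum_mul_swap_lt {M : Type*} [AddCommMonoid M] [PartialOrder M]
    [IsOrderedCancelAddMonoid M] (g : n → n → M) (π : Perm n) {u v : n} (huv : u ≠ v)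
    (h : g u (π v) + g v (π u) < g u (π u) + g v (π v)) :
    ∑ i, g i ((π * swap u v) i) < ∑ i, g i (π i) := by
  rw [← sum_add_sum_compl {u, v}, ← sum_add_sum_compl {u, v} (fun i => g i (π i)),
    sum_pair huv, sum_pair huv]
  refine add_lt_add_of_lt_of_le (by simpa [swap_apply_left, swap_apply_right]) (le_of_eq ?_)
  refine sum_congr rfl fun i hi => ?_
  simp only [mem_compl, mem_insert, mem_singleton, not_or] at hi
  rw [Perm.mul_apply, swap_apply_of_ne_of_ne hi.1 hi.2]

variable {B : Matrix ι κ R} {β : ι → κ → ℕ} {r : n → ι} {c : n → κ}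

/-- The cheaper term is `π` with its columns in rows `i₀` and `π⁻¹ (τ i₀)` exchanged. -/
theorem IsDoublingPattern.exists_termExponent_lt (hB : IsDoublingPattern B β) (hr : Injective r)
    {π τ : Perm n} (hπ : IsNontrivialTerm B r c π) (hτ : IsNontrivialTerm B r c τ) {i₀ : n}
    (hagree : ∀ v, r i₀ < r v → π v = τ v) (hlt : c (τ i₀) < c (π i₀)) :
    ∃ σ, IsNontrivialTerm B r c σ ∧ termExponent β r c σ < termExponent β r c π := by
  set u := π.symm (τ i₀)
  have hπu : π u = τ i₀ := π.apply_symm_apply _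
  have hu : u ≠ i₀ := by
    intro h
    rw [h] at hπu
    exact hlt.ne (congrArg c hπu).symm
  have hru : r u < r i₀ := by
    refine lt_of_le_of_ne (le_of_not_gt fun h => hu (τ.injective ?_)) (hr.ne hu)
    rw [← hagree u h, hπu]
  have hBu : B (r u) (c (π i₀)) ≠ 0 := by
    intro h0
    rcases hB.zero _ _ h0 with hcol | hrow
    · exact hπ i₀ (hcol _ hru)
    · exact hπ u (hπu ▸ hrow _ hlt)
  refine ⟨π * swap u i₀, fun i => ?_, ?_⟩
  · rw [Perm.mul_apply, swap_apply_def]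
    split_ifs with h h'
    · exact h ▸ hBu
    · exact h' ▸ hπu ▸ hτ i₀
    · exact hπ i
  · refine sum_mul_swap_lt (fun i j => β (r i) (c j)) π hu ?_
    have hcol := hB.col _ _ _ hru hBu (hπ i₀)
    have hrow := hB.row _ _ _ hlt (hτ i₀) (hπ i₀)
    have hpos := hB.pos _ _ (hπ u)
    simp only [hπu] at hpos ⊢
    omega

theorem IsDoublingPattern.termExponent_lt_of_isMin (hB : IsDoublingPattern B β)
    (hr : Injective r) (hc : Injective c) {π τ : Perm n} (hπ : IsNontrivialTerm B r c π)
    (hmin : ∀ σ, IsNontrivialTerm B r c σ → termExponent β r c π ≤ termExponent β r c σ)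
    (hτ : IsNontrivialTerm B r c τ) (hne : τ ≠ π) :
    termExponent β r c π < termExponent β r c τ := by
  by_contra! hle
  obtain ⟨i₀, hi₀, hmax⟩ := (univ.filter fun i => π i ≠ τ i).exists_max_image r <| by
    by_contra! h
    exact hne (Equiv.ext fun i => (not_not.1 (filter_eq_empty_iff.1 h (mem_univ i))).symm)
  have hagree : ∀ v, r i₀ < r v → π v = τ v := fun v hv => by
    by_contra h
    exact (hmax v (by simpa using h)).not_gt hv
  rcases lt_or_gt_of_ne (hc.ne (by simpa using hi₀) : c (π i₀) ≠ c (τ i₀)) with h | h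
  · obtain ⟨σ, hσ, hlt⟩ := hB.exists_termExponent_lt hr hτ hπ (fun v hv => (hagree v hv).symm) h
    exact (hle.trans (hmin σ hσ)).not_gt hlt
  · obtain ⟨σ, hσ, hlt⟩ := hB.exists_termExponent_lt hr hπ hτ hagree h
    exact (hmin σ hσ).not_gt hlt

theorem IsDoublingPattern.exists_unique_min_termExponent (hB : IsDoublingPattern B β)
    (hr : Injective r) (hc : Injective c) (h : ∃ σ, IsNontrivialTerm B r c σ) :
    ∃ π, IsNontrivialTerm B r c π ∧ ∀ τ, IsNontrivialTerm B r c τ → τ ≠ π →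
      termExponent β r c π < termExponent β r c τ := by
  classical
  obtain ⟨π, hπ, hmin⟩ :=
    (univ.filter (IsNontrivialTerm B r c)).exists_min_image (termExponent β r c) <| by
      obtain ⟨σ, hσ⟩ := h
      exact ⟨σ, by simpa using hσ⟩
  have hπ' : IsNontrivialTerm B r c π := (mem_filter.1 hπ).2
  exact ⟨π, hπ', fun τ hτ hne =>
    hB.termExponent_lt_of_isMin hr hc hπ' (fun σ hσ => hmin σ (by simpa using hσ)) hτ hne⟩

end Exchange

theorem det_submatrix_eq_sum_pow {ι κ n R : Type*} [Fintype n] [DecidableEq n] [CommRing R]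
    {B : Matrix ι κ R} {β : ι → κ → ℕ} {α : R} (hB : ∀ i ℓ, B i ℓ ≠ 0 → B i ℓ = α ^ β i ℓ)
    (r : n → ι) (c : n → κ) [DecidablePred (IsNontrivialTerm B r c)] :
    (B.submatrix r c).det = ∑ σ ∈ univ.filter (IsNontrivialTerm B r c),
      ((Perm.sign σ : ℤ) : R) * α ^ termExponent β r c σ := by
  rw [← Matrix.det_transpose, Matrix.det_apply', ← sum_filter_add_sum_filter_not univ
    (IsNontrivialTerm B r c), sum_eq_zero (s := univ.filter fun σ => ¬ _), add_zero]
  · refine sum_congr rfl fun σ hσ => congrArg _ ?_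
    rw [termExponent, ← prod_pow_eq_pow_sum]
    exact prod_congr rfl fun i _ => hB _ _ ((mem_filter.1 hσ).2 i)
  · intro σ hσ
    obtain ⟨i, hi⟩ := not_forall.1 (mem_filter.1 hσ).2
    rw [prod_eq_zero (mem_univ i) (by simpa using not_not.1 hi), mul_zero]

theorem sum_smul_pow_ne_zero {K L ι : Type*} [Field K] [Ring L] [Algebra K L] {α : L}
    {s : Finset ι} {a : ι → K} {e : ι → ℕ} (he : ∀ i ∈ s, e i < (minpoly K α).natDegree)
    {i₀ : ι} (hi₀ : i₀ ∈ s) (ha : a i₀ ≠ 0) (hsimple : ∀ i ∈ s, i ≠ i₀ → e i ≠ e i₀) :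
    ∑ i ∈ s, a i • α ^ e i ≠ 0 := by
  intro h0
  set f : K[X] := ∑ i ∈ s, monomial (e i) (a i)
  have hf : aeval α f = 0 := by simpa [f, aeval_monomial, Algebra.smul_def] using h0
  have hcoeff : f.coeff (e i₀) = a i₀ := by
    rw [finsetSum_coeff, sum_eq_single i₀ ?_ (absurd hi₀), coeff_monomial, if_pos rfl]
    intro i hi hne
    simp [coeff_monomial, hsimple i hi hne]
  have hf0 : f ≠ 0 := fun h => ha (by rw [← hcoeff, h, coeff_zero])
  have hdeg : f.natDegree < (minpoly K α).natDegree := by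
    have hpos := he i₀ hi₀
    refine (natDegree_sum_le_of_forall_le _ _ (n := (minpoly K α).natDegree - 1)
      fun i hi => ?_).trans_lt (by omega)
    exact (natDegree_monomial_le _).trans (Nat.le_sub_one_of_lt (he i hi))
  exact (natDegree_le_natDegree (minpoly.degree_le_of_ne_zero K α hf0 hf)).not_gt hdeg

theorem adjoin_simple_eq_top_of_forall_eq_pow {K L : Type*} [Field K] [Field L] [Algebra K L]
    {α : L} (hα : ∀ x : L, x ≠ 0 → ∃ k : ℕ, x = α ^ k) : K⟮α⟯ = ⊤ := by
  refine eq_top_iff.2 fun x _ => ?_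
  rcases eq_or_ne x 0 with rfl | hx
  · exact zero_mem _
  · obtain ⟨k, rfl⟩ := hα x hx
    exact pow_mem (mem_adjoin_simple_self K α) k

theorem finrank_zmod_eq_of_card_eq {p N : ℕ} [Fact p.Prime] {V : Type*} [AddCommGroup V]
    [Module (ZMod p) V] [Fintype V] (hcard : Fintype.card V = p ^ N) :
    Module.finrank (ZMod p) V = N := by
  rw [Module.card_eq_pow_finrank (K := ZMod p), ZMod.card] at hcard
  exact Nat.pow_right_injective (Fact.out : p.Prime).two_le hcard

theorem natDegree_minpoly_eq_of_forall_eq_pow {p N : ℕ} [Fact p.Prime] {F : Type*} [Field F]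
    [Fintype F] [Algebra (ZMod p) F] (hcard : Fintype.card F = p ^ N) {α : F}
    (hα : ∀ x : F, x ≠ 0 → ∃ k : ℕ, x = α ^ k) : (minpoly (ZMod p) α).natDegree = N := by
  rw [(Field.primitive_element_iff_minpoly_natDegree_eq _ α).1
    (adjoin_simple_eq_top_of_forall_eq_pow hα), finrank_zmod_eq_of_card_eq hcard]

theorem stmt4_general {p N : ℕ} (hp : p.Prime)
    {F : Type*} [Field F] [Fintype F] (hcard : Fintype.card F = p ^ N)
    (α : F) (hα : ∀ x : F, x ≠ 0 → ∃ k : ℕ, x = α ^ k)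
    {a b : ℕ} (B : Matrix (Fin a) (Fin b) F) (β : Fin a → Fin b → ℕ)
    (h1 : ∀ i ℓ, B i ℓ ≠ 0 → B i ℓ = α ^ β i ℓ ∧ 0 < β i ℓ)
    (h2 : ∀ i ℓ, B i ℓ = 0 →
      (∀ i' : Fin a, i < i' → B i' ℓ = 0) ∨ (∀ ℓ' : Fin b, ℓ' < ℓ → B i ℓ' = 0))
    (h3 : ∀ (i : Fin a) (ℓ ℓ' : Fin b), ℓ < ℓ' → B i ℓ ≠ 0 → B i ℓ' ≠ 0 →
      2 * β i ℓ ≤ β i ℓ')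
    (h4 : ∀ (i i' : Fin a) (ℓ : Fin b), i < i' → B i ℓ ≠ 0 → B i' ℓ ≠ 0 →
      2 * β i ℓ ≤ β i' ℓ)
    (hNbig : ∀ (m : ℕ) (r : Fin m → Fin a) (c : Fin m → Fin b),
      Function.Injective r → Function.Injective c →
      ∀ σ : Equiv.Perm (Fin m), (∀ i, B (r i) (c (σ i)) ≠ 0) →
      (∑ i, β (r i) (c (σ i))) < N) :
    Superregular B := by
  classical
  have := Fact.mk hp
  have := charP_of_card_eq_prime_pow hcard
  let _ : Algebra (ZMod p) F := ZMod.algebra F p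
  have hdeg := natDegree_minpoly_eq_of_forall_eq_pow hcard hα
  have hB : IsDoublingPattern B β := ⟨fun i ℓ h => (h1 i ℓ h).2, h2, h3, h4⟩
  intro m r c hr hc hex
  obtain ⟨π, hπ, hmin⟩ := hB.exists_unique_min_termExponent hr hc hex
  rw [det_submatrix_eq_sum_pow (fun i ℓ h => (h1 i ℓ h).1)]
  have hsmul : ∀ σ : Perm (Fin m), ((Perm.sign σ : ℤ) : F) * α ^ termExponent β r c σ =
      ((Perm.sign σ : ℤ) : ZMod p) • α ^ termExponent β r c σ := fun σ => by
    rw [Algebra.smul_def, map_intCast]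
  rw [sum_congr rfl fun σ _ => hsmul σ]
  exact sum_smul_pow_ne_zero
    (fun σ hσ => hdeg ▸ hNbig m r c hr hc σ (mem_filter.1 hσ).2) (by simpa using hπ)
    ((Perm.sign π).isUnit.map (Int.castRingHom (ZMod p))).ne_zero
    fun σ hσ hne => (hmin σ (mem_filter.1 hσ).2 hne).ne'

theorem stmt4 {p N : ℕ} (hp : p.Prime) (hN : 0 < N)
    {F : Type*} [Field F] [Fintype F] (hcard : Fintype.card F = p ^ N)
    (α : F) (hα : ∀ x : F, x ≠ 0 → ∃ k : ℕ, x = α ^ k)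
    {a b : ℕ} (B : Matrix (Fin a) (Fin b) F) (β : Fin a → Fin b → ℕ)
    (h1 : ∀ i ℓ, B i ℓ ≠ 0 → B i ℓ = α ^ β i ℓ ∧ 0 < β i ℓ)
    (h2 : ∀ i ℓ, B i ℓ = 0 →
      (∀ i' : Fin a, i < i' → B i' ℓ = 0) ∨ (∀ ℓ' : Fin b, ℓ' < ℓ → B i ℓ' = 0))
    (h3 : ∀ (i : Fin a) (ℓ ℓ' : Fin b), ℓ < ℓ' → B i ℓ ≠ 0 → B i ℓ' ≠ 0 →
      2 * β i ℓ ≤ β i ℓ')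
    (h4 : ∀ (i i' : Fin a) (ℓ : Fin b), i < i' → B i ℓ ≠ 0 → B i' ℓ ≠ 0 →
      2 * β i ℓ ≤ β i' ℓ)
    (hNbig : ∀ (m : ℕ) (r : Fin m → Fin a) (c : Fin m → Fin b),
      Function.Injective r → Function.Injective c →
      ∀ σ : Equiv.Perm (Fin m), (∀ i, B (r i) (c (σ i)) ≠ 0) →
      (∑ i, β (r i) (c (σ i))) < N) :
    Superregular B :=
  stmt4_general hp hcard α hα B β h1 h2 h3 h4 hNbig
end

section
/- Let C = [c_{ab}] be a square matrix of order m over a field such that det(C) has at least one nontrivial term, and such that C satisfies the zero-pattern property: if c_{iℓ} = 0 then c_{i'ℓ} = 0 for all i' > i, or c_{iℓ'} = 0 for all ℓ' < ℓ. Then there exists a permutation (i₁, i₂, …, i_m) of the columns of C, defined greedily by i_j = min{ i : c_{m−j+1, i} ≠ 0 and i ∉ {i₁,…,i_{j−1}} }, such that the antidiagonal term of the reordered matrix [C_{i₁} C_{i₂} ⋯ C_{i_m}] is nontrivial, i.e., c_{m−j+1, i_j} ≠ 0 for all j = 1, …, m. -/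
/-!
Start from any permutation `σ` whose term is nontrivial and fix the rows one at a time, from
the bottom up. At the current row, the greedy column `b` (the smallest unused column with a
nonzero entry) is at most the column `a` that `σ` uses there, since `a` is a candidate. Swapping
`a` and `b` in `σ` keeps the rows already fixed and gives the current row its greedy column; the
row `k` (higher up) that used `b` now gets `a`, and `c_{k a} ≠ 0` because of the zero pattern:
`c_{k a} = 0` would kill either the entry of the current row in column `a` or `c_{k b}` with
`b < a`.
-/

namespace Matrix

variable {ι κ α : Type*} [LinearOrder ι] [LinearOrder κ] [Zero α]

def HasZeroPattern (D : Matrix ι κ α) : Prop :=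
  ∀ j ℓ, D j ℓ = 0 → (∀ j' < j, D j' ℓ = 0) ∨ (∀ ℓ' < ℓ, D j ℓ' = 0)

def IsGreedyAt (D : Matrix ι κ α) (σ : ι ≃ κ) (j : ι) : Prop :=
  ∀ i, D j i ≠ 0 → (∀ j' < j, σ j' ≠ i) → σ j ≤ i

theorem HasZeroPattern.ne_zero {D : Matrix ι κ α} (hD : HasZeroPattern D) {j k : ι} {a b : κ}
    (hjk : j < k) (hba : b < a) (hja : D j a ≠ 0) (hkb : D k b ≠ 0) : D k a ≠ 0 := fun hka =>
  (hD k a hka).elim (fun hcol => hja (hcol j hjk)) (fun hrow => hkb (hrow b hba))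

theorem IsGreedyAt.congr {D : Matrix ι κ α} {σ σ' : ι ≃ κ} {j : ι} (h : IsGreedyAt D σ j)
    (hσ' : ∀ k ≤ j, σ' k = σ k) : IsGreedyAt D σ' j := by
  intro i hi hunused
  rw [hσ' j le_rfl]
  exact h i hi fun k hk => hσ' k hk.le ▸ hunused k hk

variable [Fintype κ]

theorem exists_isGreedyAt {D : Matrix ι κ α} (hD : HasZeroPattern D) {σ : ι ≃ κ}
    (hσ : ∀ j, D j (σ j) ≠ 0) (j : ι) :
    ∃ σ' : ι ≃ κ, (∀ k, D k (σ' k) ≠ 0) ∧ (∀ k < j, σ' k = σ k) ∧ IsGreedyAt D σ' j := by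
  classical
  set S := Finset.univ.filter fun i => D j i ≠ 0 ∧ ∀ k < j, σ k ≠ i
  have haS : σ j ∈ S := by
    simpa [S, hσ j] using fun k hk => σ.injective.ne hk.ne
  set b := S.min' ⟨_, haS⟩
  obtain ⟨hb, hb_unused⟩ : D j b ≠ 0 ∧ ∀ k < j, σ k ≠ b := by
    simpa [S] using S.min'_mem ⟨_, haS⟩
  have hba : b ≤ σ j := S.min'_le _ haS
  set σ' := σ.trans (Equiv.swap (σ j) b)
  have hσ'j : σ' j = b := by simp [σ']
  have hagree : ∀ k < j, σ' k = σ k := fun k hk =>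
    Equiv.swap_apply_of_ne_of_ne (σ.injective.ne hk.ne) (hb_unused k hk)
  refine ⟨σ', fun k => ?_, hagree, fun i hi hunused => ?_⟩
  · rcases eq_or_ne k j with rfl | hkj
    · rwa [hσ'j]
    by_cases hkb : σ k = b
    · have hσ'k : σ' k = σ j := by simp [σ', hkb]
      have hjk : j < k := (lt_or_gt_of_ne hkj).resolve_left fun hk => hb_unused k hk hkb
      have hba' : b < σ j := hba.lt_of_ne (hkb ▸ σ.injective.ne hkj)
      rw [hσ'k]
      exact hD.ne_zero hjk hba' (hσ j) (hkb ▸ hσ k)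
    · rw [show σ' k = σ k from Equiv.swap_apply_of_ne_of_ne (σ.injective.ne hkj) hkb]
      exact hσ k
  · rw [hσ'j]
    exact S.min'_le i (by simpa [S, hi] using fun k hk => hagree k hk ▸ hunused k hk)

theorem exists_forall_isGreedyAt [Fintype ι] {D : Matrix ι κ α} (hD : HasZeroPattern D)
    {σ : ι ≃ κ} (hσ : ∀ j, D j (σ j) ≠ 0) :
    ∃ π : ι ≃ κ, (∀ j, D j (π j) ≠ 0) ∧ ∀ j, IsGreedyAt D π j := by
  suffices ∀ s : Finset ι, ∃ π : ι ≃ κ, (∀ j, D j (π j) ≠ 0) ∧ ∀ j ∈ s, IsGreedyAt D π j by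
    simpa using this Finset.univ
  intro s
  induction s using Finset.induction_on_max with
  | empty => exact ⟨σ, hσ, by simp⟩
  | insert j s hlt ih =>
    obtain ⟨π, hπ, hgreedy⟩ := ih
    obtain ⟨π', hπ', hagree, hj⟩ := exists_isGreedyAt hD hπ j
    refine ⟨π', hπ', (Finset.forall_mem_insert _ _ _).2 ⟨hj, fun k hk => ?_⟩⟩
    exact (hgreedy k hk).congr fun k' hk' => hagree k' (hk'.trans_lt (hlt k hk))

end Matrix

/-- Greedy construction of a nontrivial antidiagonal: if a square matrix `C` has a
nontrivial determinant term and satisfies the zero pattern property, then there is a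
column permutation `π`, chosen greedily (row by row from the bottom, each time the
smallest still-unused column index with a nonzero entry), such that
`C (m-j+1) (π j) ≠ 0` for all `j`, i.e. the antidiagonal term of the reordered matrix
is nontrivial. -/
theorem stmt7 {F : Type*} [Field F] {m : ℕ}
    (C : Matrix (Fin m) (Fin m) F)
    (hnt : ∃ σ : Equiv.Perm (Fin m), ∀ i, C i (σ i) ≠ 0)
    (hzero : ∀ i ℓ, C i ℓ = 0 →
      (∀ i' : Fin m, i < i' → C i' ℓ = 0) ∨ (∀ ℓ' : Fin m, ℓ' < ℓ → C i ℓ' = 0)) :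
    ∃ π : Equiv.Perm (Fin m),
      (∀ j : Fin m, C j.rev (π j) ≠ 0) ∧
      (∀ j i : Fin m, C j.rev i ≠ 0 → (∀ j' : Fin m, j' < j → π j' ≠ i) → π j ≤ i) := by
  obtain ⟨σ, hσ⟩ := hnt
  -- rows are processed from the bottom, so work with `C` upside down
  set D : Matrix (Fin m) (Fin m) F := C.submatrix Fin.rev id
  have hD : D.HasZeroPattern := fun j ℓ h =>
    (hzero j.rev ℓ h).imp_left fun hcol j' hj' => hcol j'.rev (Fin.rev_lt_rev.2 hj')
  exact Matrix.exists_forall_isGreedyAt hD (σ := Fin.revPerm.trans σ) fun j => hσ j.rev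
end

section
/- Let C be a convolutional code of rate k/n with distinct Forney indices ν₁ < ν₂ < ⋯ < ν_ℓ having multiplicities m₁, …, m_ℓ. Then the distance of C satisfies dist(C) ≤ n(ν₁ + 1) − m₁ + 1. -/
/-!
Let `S` be the set of columns of degree `ν₁` (so `#S = m₁`) and `T` any `m₁ - 1` rows.
Since `#T < #S`, there is a nonzero constant information vector `c` supported on `S` for which
the `z^ν₁`-coefficient of the codeword `G c` vanishes on the rows in `T`. Every entry of `G c`
has degree at most `ν₁`, so rows in `T` carry at most `ν₁` nonzero coefficients and the other
rows at most `ν₁ + 1`. The codeword is nonzero because its `z^ν₁`-coefficient is `G^{hc} c`,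
and `G^{hc}` has full column rank.
-/

/-- The weight of a polynomial vector: the total number of nonzero field coefficients. -/
def polyWt {F : Type*} [Semiring F] {n : ℕ} (v : Fin n → Polynomial F) : ℕ :=
  ∑ i, (v i).support.card

open Polynomial Finset Matrix

namespace Polynomial

variable {R : Type*} [Semiring R]

theorem card_support_le_of_natDegree_le {p : R[X]} {d : ℕ} (hp : p.natDegree ≤ d) :
    #p.support ≤ d + 1 := by
  simpa using card_le_card (supp_subset_range (Nat.lt_succ_of_le hp))

theorem card_support_le_of_coeff_eq_zero {p : R[X]} {d : ℕ} (hp : p.natDegree ≤ d)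
    (hd : p.coeff d = 0) : #p.support ≤ d := by
  have hsub : p.support ⊆ range d := fun a ha =>
    mem_range.2 <| ((le_natDegree_of_mem_supp a ha).trans hp).lt_of_ne
      fun h => mem_support_iff.1 ha (h ▸ hd)
  simpa using card_le_card hsub

theorem coeff_mulVec_C {m n : Type*} [Fintype n] (G : Matrix m n R[X]) (c : n → R) (i : m)
    (d : ℕ) : ((G *ᵥ fun j => C (c j)) i).coeff d = ((G.map fun p => p.coeff d) *ᵥ c) i := by
  simp [Matrix.mulVec, dotProduct, finsetSum_coeff, coeff_mul_C]

theorem coeff_mulVec_C_of_colDegree_eq {m n : Type*} [Fintype n] (G : Matrix m n R[X])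
    (D : n → ℕ) {c : n → R} {d : ℕ} (hc : ∀ j, c j ≠ 0 → D j = d) (i : m) :
    ((G *ᵥ fun j => C (c j)) i).coeff d = ((of fun i j => (G i j).coeff (D j)) *ᵥ c) i := by
  rw [coeff_mulVec_C]
  refine sum_congr rfl fun j _ => ?_
  by_cases hj : c j = 0
  · simp [hj]
  · simp [hc j hj]

theorem natDegree_mulVec_C_le {m n : Type*} [Fintype n] (G : Matrix m n R[X]) (c : n → R)
    (i : m) {d : ℕ} (hG : ∀ j, c j ≠ 0 → (G i j).natDegree ≤ d) :
    ((G *ᵥ fun j => C (c j)) i).natDegree ≤ d := by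
  refine natDegree_sum_le_of_forall_le _ _ fun j _ => ?_
  by_cases hc : c j = 0
  · simp [hc]
  · exact natDegree_mul_C_le _ _ |>.trans (hG j hc)

end Polynomial

theorem polyWt_add_card_le {R : Type*} [Semiring R] {n : ℕ} (v : Fin n → R[X]) {d : ℕ}
    (t : Finset (Fin n)) (hdeg : ∀ i, (v i).natDegree ≤ d)
    (htop : ∀ i ∈ t, (v i).coeff d = 0) :
    polyWt v + #t ≤ n * (d + 1) := by
  classical
  calc polyWt v + #t = ∑ i, (#(v i).support + if i ∈ t then 1 else 0) := by
        simp [polyWt, sum_add_distrib]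
    _ ≤ ∑ _i : Fin n, (d + 1) := sum_le_sum fun i _ => by
        split_ifs with hi
        · exact Nat.add_le_add_right (card_support_le_of_coeff_eq_zero (hdeg i) (htop i hi)) 1
        · exact card_support_le_of_natDegree_le (hdeg i)
    _ = n * (d + 1) := by simp

namespace Matrix

variable {K : Type*} [Field K] {m n : Type*} [Fintype n]

theorem exists_ne_zero_mulVec_eq_zero_of_card_lt [Fintype m] (B : Matrix m n K)
    (h : Fintype.card m < Fintype.card n) : ∃ v ≠ 0, B *ᵥ v = 0 := by
  have := LinearMap.ker_ne_bot_of_finrank_lt (f := B.mulVecLin) (by simpa using h)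
  obtain ⟨v, hv, hv0⟩ := (Submodule.ne_bot_iff _).1 this
  exact ⟨v, hv0, hv⟩

theorem exists_ne_zero_supported_mulVec_eq_zero_on [DecidableEq n] (A : Matrix m n K) (s : Finset n)
    (t : Finset m) (h : #t < #s) :
    ∃ c ≠ 0, (∀ j ∉ s, c j = 0) ∧ ∀ i ∈ t, (A *ᵥ c) i = 0 := by
  obtain ⟨w, hw, hBw⟩ := exists_ne_zero_mulVec_eq_zero_of_card_lt
    (A.submatrix ((↑) : t → m) ((↑) : s → n)) (by simpa using h)
  refine ⟨fun j => if hj : j ∈ s then w ⟨j, hj⟩ else 0, ?_, fun j hj => dif_neg hj, ?_⟩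
  · intro h0
    exact hw (funext fun j => by simpa using congrFun h0 j)
  · intro i hi
    have := congrFun hBw ⟨i, hi⟩
    simp only [mulVec, dotProduct, submatrix_apply, Pi.zero_apply] at this ⊢
    rw [← sum_subset (subset_univ s) fun j _ hj => by simp [hj], ← this, ← sum_coe_sort s]
    exact sum_congr rfl fun j _ => by rw [dif_pos j.2]

theorem mulVec_ne_zero_of_rank_eq_card_width {A : Matrix m n K} (h : A.rank = Fintype.card n)
    {v : n → K} (hv : v ≠ 0) : A *ᵥ v ≠ 0 := by
  have hker := A.mulVecLin.finrank_range_add_finrank_ker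
  rw [← rank, h, Module.finrank_fintype_fun_eq_card, add_eq_left,
    Submodule.finrank_eq_zero] at hker
  exact fun h0 => hv (by simpa [hker] using (LinearMap.mem_ker (f := A.mulVecLin)).2 h0)

end Matrix

theorem stmt8_general {F : Type*} [Field F] {n k : ℕ}
    (G : Matrix (Fin n) (Fin k) (Polynomial F))
    (D : Fin k → ℕ)
    (hdeg : ∀ (i : Fin n) (j : Fin k), (G i j).natDegree ≤ D j)
    (hred : (Matrix.of fun (i : Fin n) (j : Fin k) => (G i j).coeff (D j)).rank = k)
    (ν₁ : ℕ) (hex : ∃ j, D j = ν₁)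
    (m₁ : ℕ) (hm₁ : m₁ = Nat.card {j : Fin k // D j = ν₁}) :
    ∃ u : Fin k → Polynomial F, G.mulVec u ≠ 0 ∧
      polyWt (G.mulVec u) ≤ n * (ν₁ + 1) - m₁ + 1 := by
  classical
  set A : Matrix (Fin n) (Fin k) F := Matrix.of fun i j => (G i j).coeff (D j)
  set S := univ.filter fun j => D j = ν₁
  have hS : #S = m₁ := by rw [hm₁, Nat.card_eq_fintype_card, Fintype.card_subtype]
  have hS_pos : 0 < #S := card_pos.2 (by simpa [S, Finset.Nonempty] using hex)
  have hSn : #S - 1 ≤ n := calc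
    #S - 1 ≤ k := (Nat.sub_le _ _).trans ((card_le_univ S).trans (Fintype.card_fin k).le)
    _ ≤ n := hred ▸ A.rank_le_height
  obtain ⟨t, -, ht⟩ := exists_subset_card_eq (s := (univ : Finset (Fin n)))
    (hSn.trans_eq (by simp))
  obtain ⟨c, hc, hcS, hct⟩ := A.exists_ne_zero_supported_mulVec_eq_zero_on S t (by omega)
  have hsupp : ∀ j, c j ≠ 0 → D j = ν₁ := fun j hj => by
    by_contra h; exact hj (hcS j (by simpa [S] using h))
  have htop := coeff_mulVec_C_of_colDegree_eq G D hsupp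
  have hne : (G *ᵥ fun j => C (c j)) ≠ 0 := fun h0 =>
    mulVec_ne_zero_of_rank_eq_card_width (hred.trans (Fintype.card_fin k).symm) hc
      (funext fun i => by simpa [h0] using (htop i).symm)
  refine ⟨fun j => C (c j), hne, ?_⟩
  have hwt := polyWt_add_card_le (G *ᵥ fun j => C (c j)) t
    (fun i => natDegree_mulVec_C_le G c i fun j hj => (hsupp j hj) ▸ hdeg i j)
    (fun i hi => (htop i).trans (hct i hi))
  omega

/-- Upper bound on the distance of a convolutional code: given a column reduced encoder
`G(z)` with column degrees `D`, smallest column degree (Forney index) `ν₁` of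
multiplicity `m₁`, there exists a nonzero codeword of weight at most
`n(ν₁+1) - m₁ + 1`; hence `dist(C) ≤ n(ν₁+1) - m₁ + 1`. -/
theorem stmt8 {F : Type*} [Field F] {n k : ℕ} (hk : 0 < k) (hkn : k < n)
    (G : Matrix (Fin n) (Fin k) (Polynomial F))
    (D : Fin k → ℕ)
    (hdeg : ∀ (i : Fin n) (j : Fin k), (G i j).natDegree ≤ D j)
    (hred : (Matrix.of fun (i : Fin n) (j : Fin k) => (G i j).coeff (D j)).rank = k)
    (ν₁ : ℕ) (hmin : ∀ j, ν₁ ≤ D j) (hex : ∃ j, D j = ν₁)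
    (m₁ : ℕ) (hm₁ : m₁ = Nat.card {j : Fin k // D j = ν₁}) :
    ∃ u : Fin k → Polynomial F, G.mulVec u ≠ 0 ∧
      polyWt (G.mulVec u) ≤ n * (ν₁ + 1) - m₁ + 1 :=
  stmt8_general G D hdeg hred ν₁ hex m₁ hm₁
end

section
/- Let B = [b₀ b₁ ⋯ b_{n−1}] ∈ F^{n×n} be a lower triangular matrix. Then B is LT-superregular if and only if for every F-linear combination b (with nonzero coefficients) of columns b_{i₁}, b_{i₂}, …, b_{i_N} with i₁ < i₂ < ⋯ < i_N, one has wt(b) ≥ (n − i₁) − N + 1. -/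
/-- A lower triangular matrix is LT-superregular if every minor all of whose diagonal
entries come from the lower triangular part (i.e. given by strictly increasing row and
column selections `r`, `c` with `c i ≤ r i`) is nonzero. -/
def LTSuperregular {F : Type*} [Field F] {n : ℕ} (B : Matrix (Fin n) (Fin n) F) : Prop :=
  ∀ (N : ℕ) (r c : Fin N → Fin n), StrictMono r → StrictMono c →
    (∀ i, c i ≤ r i) → (B.submatrix r c).det ≠ 0

/-- The weight of a vector: the number of its nonzero entries. -/
noncomputable def wt {F : Type*} [Zero F] {ι : Type*} (v : ι → F) : ℕ :=
  Nat.card {i // v i ≠ 0}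

/-!
Write `b = ∑ⱼ fⱼ b_{cⱼ}` and `c₀` for its first column. Since `B` is lower triangular, `b`
vanishes above row `c₀`, so a weight below `(n - c₀) - N + 1` means that `b` has at least `N`
zeros `r₀ < ⋯ < r_{N-1}` in rows `≥ c₀`. If `cⱼ ≤ rⱼ` for all `j`, the minor on rows `r` and
columns `c` kills `f`. Otherwise some `rᵢ < cᵢ` with `i > 0`, and the partial sum over the first
`i` columns still vanishes at `r₀, …, r_{i-1}`, so induction on `N` applies.
Conversely, a kernel vector `v` of an LT-minor on rows `r` and columns `c` gives the combination
`∑ⱼ vⱼ b_{cⱼ}`; if `j₀` is the first index in the support of `v`, this combination vanishes above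
row `c_{j₀}` and at the `N - j₀` rows `r_{j₀}, …`, all `≥ c_{j₀}`, so its weight is too small.
-/

open Finset Matrix

lemma wt_eq_card_filter {M ι : Type*} [Zero M] [DecidableEq M] [Fintype ι] (v : ι → M) :
    wt v = #{i | v i ≠ 0} := by
  rw [wt, Nat.card_eq_fintype_card, Fintype.card_subtype]

lemma wt_add_card_filter_Ici_eq_zero {M : Type*} [Zero M] [DecidableEq M] {n : ℕ}
    {v : Fin n → M} {a : Fin n} (hv : ∀ i < a, v i = 0) :
    wt v + #{i ∈ Ici a | v i = 0} = n - a := by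
  have hsupp : ({i | v i ≠ 0} : Finset (Fin n)) = {i ∈ Ici a | v i ≠ 0} := by
    ext i
    simp only [mem_filter, mem_univ, true_and, mem_Ici]
    exact ⟨fun hi => ⟨not_lt.1 fun hlt => hi (hv i hlt), hi⟩, And.right⟩
  rw [wt_eq_card_filter, hsupp, add_comm, card_filter_add_card_filter_not, Fin.card_Ici]

theorem Fin.sum_castLE_eq_sum {M : Type*} [AddCommMonoid M] {k N : ℕ} (h : k ≤ N)
    (g : Fin N → M) (hg : ∀ m : Fin N, k ≤ m → g m = 0) :
    ∑ m : Fin k, g (Fin.castLE h m) = ∑ m, g m := by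
  refine (sum_map univ (Fin.castLEEmb h) g).symm.trans ?_
  refine sum_subset (subset_univ _) fun m _ hm => hg m (not_lt.1 fun hlt => hm ?_)
  exact mem_map.2 ⟨⟨m, hlt⟩, mem_univ _, rfl⟩

theorem Finset.sum_orderIsoOfFin {ι M : Type*} [LinearOrder ι] [Fintype ι] [AddCommMonoid M]
    (s : Finset ι) (g : ι → M) (hg : ∀ i ∉ s, g i = 0) :
    ∑ t : Fin #s, g (s.orderIsoOfFin rfl t) = ∑ i, g i := by
  refine ((s.orderIsoOfFin rfl).toEquiv.sum_comp (fun i : s => g i)).trans ?_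
  rw [sum_coe_sort]
  exact sum_subset (subset_univ s) fun i _ hi => hg i hi

section LowerTriangular

variable {R : Type*} [CommSemiring R] {n : ℕ} {B : Matrix (Fin n) (Fin n) R}

lemma sum_mul_apply_eq_zero_of_lt (hlt : ∀ i j : Fin n, i < j → B i j = 0) {ι : Type*}
    [Fintype ι] (c : ι → Fin n) (f : ι → R) {i : Fin n} (hi : ∀ j, f j ≠ 0 → i < c j) :
    ∑ j, f j * B i (c j) = 0 :=
  sum_eq_zero fun j _ => by
    by_cases hj : f j = 0
    · rw [hj, zero_mul]
    · rw [hlt _ _ (hi j hj), mul_zero]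

lemma sum_mul_apply_eq_mulVec_submatrix {N : ℕ} (r c : Fin N → Fin n) (f : Fin N → R)
    (t : Fin N) : ∑ j, f j * B (r t) (c j) = (B.submatrix r c *ᵥ f) t := by
  simp only [mulVec, dotProduct, submatrix_apply, mul_comm]

lemma wt_sum_mul_add_le (hlt : ∀ i j : Fin n, i < j → B i j = 0) {N : ℕ}
    {r c : Fin N → Fin n} (hr : Function.Injective r) (hc : Monotone c) (hrc : ∀ j, c j ≤ r j)
    {v : Fin N → R} (hv : B.submatrix r c *ᵥ v = 0) {j₀ : Fin N}
    (hj₀ : ∀ j, v j ≠ 0 → j₀ ≤ j) :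
    wt (fun i => ∑ j, v j * B i (c j)) + (N - j₀) ≤ n - c j₀ := by
  classical
  have hb : ∀ i < c j₀, ∑ j, v j * B i (c j) = 0 := fun i hi =>
    sum_mul_apply_eq_zero_of_lt hlt c v fun j hj => hi.trans_le (hc (hj₀ j hj))
  rw [← wt_add_card_filter_Ici_eq_zero hb, ← Fin.card_Ici j₀,
    ← card_image_of_injective _ hr]
  gcongr
  intro x hx
  obtain ⟨t, ht, rfl⟩ := mem_image.1 hx
  rw [mem_Ici] at ht
  rw [mem_filter, mem_Ici, sum_mul_apply_eq_mulVec_submatrix, hv]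
  exact ⟨(hc ht).trans (hrc t), rfl⟩

end LowerTriangular

section Superregular

variable {F : Type*} [Field F] {n : ℕ} {B : Matrix (Fin n) (Fin n) F}

theorem LTSuperregular.exists_sum_mul_ne_zero (hB : LTSuperregular B)
    (hlt : ∀ i j : Fin n, i < j → B i j = 0) :
    ∀ {N : ℕ} (hN : 0 < N) {r c : Fin N → Fin n}, StrictMono r → StrictMono c →
      c ⟨0, hN⟩ ≤ r ⟨0, hN⟩ → ∀ {f : Fin N → F}, (∀ j, f j ≠ 0) →
        ∃ t, ∑ j, f j * B (r t) (c j) ≠ 0 := by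
  intro N
  induction N using Nat.strong_induction_on with
  | _ N ih =>
  intro hN r c hr hc h0 f hf
  by_contra! hzero
  by_cases hdiag : ∀ j, c j ≤ r j
  · refine hB N r c hr hc hdiag (exists_mulVec_eq_zero_iff.1 ⟨f, ?_, ?_⟩)
    · exact fun h => hf ⟨0, hN⟩ (congrFun h _)
    · ext t
      rw [← sum_mul_apply_eq_mulVec_submatrix, hzero t, Pi.zero_apply]
  push Not at hdiag
  obtain ⟨i, hi⟩ := hdiag
  have hi0 : 0 < (i : ℕ) := Nat.pos_of_ne_zero fun h => by
    rw [show i = ⟨0, hN⟩ from Fin.ext h] at hi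
    exact (hi.trans_le h0).false
  have hiN : (i : ℕ) ≤ N := i.isLt.le
  obtain ⟨t, ht⟩ := ih i i.isLt hi0 (hr.comp (Fin.strictMono_castLE hiN))
    (hc.comp (Fin.strictMono_castLE hiN)) h0 (f := f ∘ Fin.castLE hiN) fun j => hf _
  refine ht ?_
  -- the columns from `cᵢ` on vanish at the rows `r₀, …, r_{i-1}`, which lie above `rᵢ < cᵢ`
  rw [← hzero (Fin.castLE hiN t)]
  refine Fin.sum_castLE_eq_sum hiN (fun m => f m * B (r (Fin.castLE hiN t)) (c m)) fun m hm => ?_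
  have hrt : r (Fin.castLE hiN t) < r i := hr (Fin.mk_lt_mk.2 t.isLt)
  rw [hlt _ _ (hrt.trans (hi.trans_le (hc.monotone (Fin.mk_le_mk.2 hm)))), mul_zero]

theorem LTSuperregular.le_wt_sum_mul (hB : LTSuperregular B)
    (hlt : ∀ i j : Fin n, i < j → B i j = 0) {N : ℕ} (hN : 0 < N) {c : Fin N → Fin n}
    (hc : StrictMono c) {f : Fin N → F} (hf : ∀ j, f j ≠ 0) :
    n - (c ⟨0, hN⟩ : ℕ) - N + 1 ≤ wt (fun i => ∑ j, f j * B i (c j)) := by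
  classical
  set c₀ := c ⟨0, hN⟩
  have hc₀ : ∀ j, c₀ ≤ c j := fun j => hc.monotone (Fin.mk_le_of_le_val (Nat.zero_le _))
  have hb : ∀ i < c₀, ∑ j, f j * B i (c j) = 0 := fun i hi =>
    sum_mul_apply_eq_zero_of_lt hlt c f fun j _ => hi.trans_le (hc₀ j)
  have hwt := wt_add_card_filter_Ici_eq_zero hb
  have hNc : N ≤ n - c₀ := by
    simpa using
      card_le_card_of_injOn (s := univ) c (fun j _ => mem_Ici.2 (hc₀ j)) hc.injective.injOn
  by_contra! hlow
  obtain ⟨Z, hZ, hZN⟩ := exists_subset_card_eq (s := {i ∈ Ici c₀ | ∑ j, f j * B i (c j) = 0})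
    (n := N) (by omega)
  have hrZ := fun t => mem_filter.1 (hZ (Z.orderEmbOfFin_mem hZN t))
  obtain ⟨t, ht⟩ := hB.exists_sum_mul_ne_zero hlt hN (Z.orderEmbOfFin hZN).strictMono hc
    (mem_Ici.1 (hrZ _).1) hf
  exact ht (hrZ t).2

theorem ltSuperregular_of_le_wt (hlt : ∀ i j : Fin n, i < j → B i j = 0)
    (H : ∀ (N : ℕ) (hN : 0 < N) (c : Fin N → Fin n), StrictMono c →
      ∀ f : Fin N → F, (∀ j, f j ≠ 0) →
        n - (c ⟨0, hN⟩ : ℕ) - N + 1 ≤ wt (fun i => ∑ j, f j * B i (c j))) :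
    LTSuperregular B := by
  classical
  intro N r c hr hc hrc hdet
  obtain ⟨v, hv0, hv⟩ := exists_mulVec_eq_zero_iff.2 hdet
  set S : Finset (Fin N) := {j | v j ≠ 0}
  have hS : 0 < #S := by
    obtain ⟨j, hj⟩ := Function.ne_iff.1 hv0
    exact card_pos.2 ⟨j, by simpa [S] using hj⟩
  set e := S.orderIsoOfFin rfl
  set j₀ : Fin N := (e ⟨0, hS⟩ : Fin N)
  have hj₀ : ∀ j, v j ≠ 0 → j₀ ≤ j := fun j hj => by
    obtain ⟨t, ht⟩ := e.surjective ⟨j, by simpa [S] using hj⟩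
    have h := e.monotone (Fin.mk_le_of_le_val (Nat.zero_le t) : (⟨0, hS⟩ : Fin #S) ≤ t)
    rwa [ht] at h
  have hSN : #S ≤ N - j₀ := by
    rw [← Fin.card_Ici]
    exact card_le_card fun j hj => mem_Ici.2 (hj₀ j (mem_filter.1 hj).2)
  have hreindex : (fun i => ∑ t, v (e t) * B i (c (e t))) = fun i => ∑ j, v j * B i (c j) :=
    funext fun i => sum_orderIsoOfFin S (fun j => v j * B i (c j)) fun j hj => by
      simp only [S, mem_filter, mem_univ, true_and, not_not] at hj
      rw [hj, zero_mul]
  have hlow : n - (c j₀ : ℕ) - #S + 1 ≤ wt (fun i => ∑ j, v j * B i (c j)) :=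
    hreindex ▸ H #S hS (fun t => c (e t))
      (hc.comp ((Subtype.strictMono_coe _).comp e.strictMono)) (fun t => v (e t))
      fun t => (mem_filter.1 (e t).2).2
  have hup := wt_sum_mul_add_le hlt hr.injective hc.monotone hrc hv hj₀
  have := (c j₀).isLt
  omega

end Superregular

/-- A lower triangular matrix `B = [b₀ ⋯ b_{n-1}]` is LT-superregular if and only if
every linear combination with nonzero coefficients of columns `b_{i₁}, …, b_{i_N}`
(`i₁ < ⋯ < i_N`) has weight at least `(n - i₁) - N + 1`. -/
theorem stmt18 {F : Type*} [Field F] {n : ℕ} (B : Matrix (Fin n) (Fin n) F)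
    (hlt : ∀ i j : Fin n, i < j → B i j = 0) :
    LTSuperregular B ↔
      ∀ (N : ℕ) (hN : 0 < N) (c : Fin N → Fin n), StrictMono c →
        ∀ f : Fin N → F, (∀ j, f j ≠ 0) →
          n - (c ⟨0, hN⟩ : ℕ) - N + 1 ≤ wt (fun i => ∑ j, f j * B i (c j)) :=
  ⟨fun hB _ hN _ hc _ hf => hB.le_wt_sum_mul hlt hN hc hf, ltSuperregular_of_le_wt hlt⟩
end
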